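/- arXiv:2405.05291 — 3 statements merged into one kernel-verified Lean document; each statement's English description precedes it below -/
import Mathlib

section
/- Assume 𝔄 is unital. Let x, y₁, y₂ ∈ X and ε > 0. Then there exists y ∈ X such that (i) |⟨y,z⟩|² ≤ |⟨y₁,z⟩|² + |⟨y₂,z⟩|² for every z ∈ X, and (ii) |⟨y,x⟩|² ≥ |⟨y₁,x⟩|² + |⟨y₂,x⟩|² − ε·1_𝔄 in the order of 𝔄. (Explicitly, one may take y = (a+ε₀)⁻¹⟨x,y₁⟩y₁ + (a+ε₀)⁻¹⟨x,y₂⟩y₂, where a = (|⟨y₁,x⟩|² + |⟨y₂,x⟩|²)^{1/2} and ε₀ = ε/(4‖a‖+ε).) -/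
open scoped RightActions

/-- The December 2024 Mathlib `CStarModule` (right module, action by `Aᵐᵒᵖ`), kept verbatim since
Mathlib's `CStarModule` is now a left module over `A`. -/
class RightCStarModule (A E : Type*) [NonUnitalSemiring A] [StarRing A]
    [Module ℂ A] [AddCommGroup E] [Module ℂ E] [PartialOrder A] [SMul Aᵐᵒᵖ E] [Norm A] [Norm E]
    extends Inner A E where
  inner_add_right {x} {y} {z} : inner x (y + z) = inner x y + inner x z
  inner_self_nonneg {x} : 0 ≤ inner x x
  inner_self {x} : inner x x = 0 ↔ x = 0
  inner_op_smul_right {a : A} {x y : E} : inner x (y <• a) = inner x y * a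
  inner_smul_right_complex {z : ℂ} {x} {y} : inner x (z • y) = z • inner x y
  star_inner x y : star (inner x y) = inner y x
  norm_eq_sqrt_norm_inner_self x : ‖x‖ = √‖inner x x‖

variable {A : Type*} [CStarAlgebra A] [PartialOrder A] [StarOrderedRing A]
  {E : Type*} [NormedAddCommGroup E] [Module ℂ E] [SMul Aᵐᵒᵖ E] [RightCStarModule A E]
  [CompleteSpace E]

namespace RightCStarModule

lemma inner_add_left {x y z : E} : (inner A (x + y) z : A) = inner A x z + inner A y z := by
  rw [← star_inner, inner_add_right, star_add, star_inner, star_inner]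

lemma inner_op_smul_left {a : A} {x y : E} : (inner A (x <• a) y : A) = star a * inner A x y := by
  rw [← star_inner, inner_op_smul_right, star_mul, star_inner]

end RightCStarModule

open CStarModule WithCStarModule in
private lemma cs_two (d₁ d₂ v₁ v₂ : A) (h : ‖star d₁ * d₁ + star d₂ * d₂‖ ≤ 1) :
    star (star d₁ * v₁ + star d₂ * v₂) * (star d₁ * v₁ + star d₂ * v₂) ≤
      star v₁ * v₁ + star v₂ * v₂ := by
  let D : C⋆ᵐᵒᵈ(A, A × A) := (equiv A (A × A)).symm (star v₁, star v₂)
  let V : C⋆ᵐᵒᵈ(A, A × A) := (equiv A (A × A)).symm (star d₁, star d₂)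
  have hDV : (inner A D V : A) = star d₁ * v₁ + star d₂ * v₂ := by
    simp [D, V, prod_inner, inner_def]
  have hDD : (inner A D D : A) = star v₁ * v₁ + star v₂ * v₂ := by
    simp [D, prod_inner, inner_def]
  have hstar : star (inner A D V : A) = (inner A V D : A) := CStarModule.star_inner D V
  have hCS : (inner A V D : A) * (inner A D V : A) ≤ ‖V‖ ^ 2 • (inner A D D : A) :=
    inner_mul_inner_swap_le
  have hDDpos : (0 : A) ≤ (inner A D D : A) := CStarModule.inner_self_nonneg
  have hV : ‖V‖ ^ 2 ≤ 1 := by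
    rw [prod_norm_sq]
    simpa [V, inner_def] using h
  calc star (star d₁ * v₁ + star d₂ * v₂) * (star d₁ * v₁ + star d₂ * v₂)
      = (inner A V D : A) * (inner A D V : A) := by rw [← hDV, hstar]
    _ ≤ ‖V‖ ^ 2 • (inner A D D : A) := hCS
    _ ≤ (1 : ℝ) • (inner A D D : A) := smul_le_smul_of_nonneg_right hV hDDpos
    _ = star v₁ * v₁ + star v₂ * v₂ := by rw [one_smul, hDD]

open CStarModule in
/-- If `𝔄` is unital, then for all `x, y₁, y₂ ∈ X` and `ε > 0` there is `y ∈ X` with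
`|⟨y,z⟩|² ≤ |⟨y₁,z⟩|² + |⟨y₂,z⟩|²` for all `z ∈ X`, and
`|⟨y,x⟩|² ≥ |⟨y₁,x⟩|² + |⟨y₂,x⟩|² − ε·1` in the order of `𝔄`. -/
theorem exists_single_vector_dominating (x y₁ y₂ : E) (ε : ℝ) (hε : 0 < ε) :
    ∃ y : E,
      (∀ z : E, star (inner A y z : A) * (inner A y z : A) ≤
        star (inner A y₁ z : A) * (inner A y₁ z : A) +
          star (inner A y₂ z : A) * (inner A y₂ z : A)) ∧
      star (inner A y₁ x : A) * (inner A y₁ x : A) +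
          star (inner A y₂ x : A) * (inner A y₂ x : A) - ε • (1 : A) ≤
        star (inner A y x : A) * (inner A y x : A) := by
  rcases subsingleton_or_nontrivial A with hA | hA
  · exact ⟨y₁, fun z => le_of_eq (Subsingleton.elim _ _), le_of_eq (Subsingleton.elim _ _)⟩
  set b₁ : A := inner A x y₁ with hb₁
  set b₂ : A := inner A x y₂ with hb₂
  have hxy₁ : (inner A y₁ x : A) = star b₁ := by rw [hb₁, RightCStarModule.star_inner]
  have hxy₂ : (inner A y₂ x : A) = star b₂ := by rw [hb₂, RightCStarModule.star_inner]
  set q : A := b₁ * star b₁ + b₂ * star b₂ with hqdef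
  have hq : 0 ≤ q := add_nonneg (mul_star_self_nonneg b₁) (mul_star_self_nonneg b₂)
  have hqsa : IsSelfAdjoint q := .of_nonneg hq
  set N : ℝ := ‖q‖ with hN
  have hNs : (0:ℝ) ≤ Real.sqrt N := Real.sqrt_nonneg N
  obtain ⟨ε₀, hε₀, hεeq⟩ : ∃ ε₀ : ℝ, 0 < ε₀ ∧ ε₀ * (2 * Real.sqrt N + 1) = ε :=
    ⟨ε / (2 * Real.sqrt N + 1), div_pos hε (by positivity), by field_simp⟩
  set f : ℝ → ℝ := fun t => (Real.sqrt t + ε₀)⁻¹ with hfdef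
  have hfc : Continuous f := by
    refine (Real.continuous_sqrt.add continuous_const).inv₀ fun t => ?_
    have := Real.sqrt_nonneg t; exact (add_pos_of_nonneg_of_pos this hε₀).ne'
  set c : A := cfc f q with hcdef
  have hc0 : 0 ≤ c := cfc_nonneg fun t _ => by
    have := Real.sqrt_nonneg t; positivity
  have hcsa : star c = c := (IsSelfAdjoint.of_nonneg hc0)
  -- c * q * c as cfc
  have hfon : ContinuousOn f (spectrum ℝ q) := hfc.continuousOn
  have hid : ContinuousOn (fun t : ℝ => t) (spectrum ℝ q) := continuousOn_id
  have h1 : c * (q * c) = cfc (fun t => f t * (t * f t)) q := by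
    rw [hcdef, cfc_mul f (fun t => t * f t) q hfon (hid.mul hfon),
      cfc_mul (fun t : ℝ => t) f q hid hfon, cfc_id' ℝ (a := q) hqsa]
  have hnorm1 : ‖c * (q * c)‖ ≤ 1 := by
    rw [h1]
    refine norm_cfc_le zero_le_one fun t ht => ?_
    have ht0 : 0 ≤ t := spectrum_nonneg_of_nonneg hq ht
    set s : ℝ := Real.sqrt t with hs
    have hs0 : 0 ≤ s := Real.sqrt_nonneg t
    have hs2 : s ^ 2 = t := Real.sq_sqrt ht0
    have hu : 0 < s + ε₀ := by positivity
    have hval : f t * (t * f t) = t / (s + ε₀) ^ 2 := by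
      simp only [hfdef]
      rw [eq_div_iff (by positivity)]
      field_simp
      rw [hs]; ring
    rw [hval, Real.norm_eq_abs, abs_of_nonneg (by positivity), div_le_one (by positivity)]
    nlinarith
  -- the element y
  set d₁ : A := star b₁ * c with hd₁
  set d₂ : A := star b₂ * c with hd₂
  have hsd₁ : star d₁ = c * b₁ := by rw [hd₁, star_mul, star_star, hcsa]
  have hsd₂ : star d₂ = c * b₂ := by rw [hd₂, star_mul, star_star, hcsa]
  refine ⟨y₁ <• d₁ + y₂ <• d₂, ?_, ?_⟩
  · intro z
    have hinner : (inner A (y₁ <• d₁ + y₂ <• d₂) z : A) =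
        star d₁ * (inner A y₁ z) + star d₂ * (inner A y₂ z) := by
      rw [RightCStarModule.inner_add_left, RightCStarModule.inner_op_smul_left, RightCStarModule.inner_op_smul_left]
    rw [hinner]
    refine cs_two d₁ d₂ _ _ ?_
    have : star d₁ * d₁ + star d₂ * d₂ = c * (q * c) := by
      rw [hsd₁, hsd₂, hd₁, hd₂, hqdef]
      noncomm_ring
    rw [this]; exact hnorm1
  · have hinner : (inner A (y₁ <• d₁ + y₂ <• d₂) x : A) = c * q := by
      rw [RightCStarModule.inner_add_left, RightCStarModule.inner_op_smul_left, RightCStarModule.inner_op_smul_left, hxy₁, hxy₂,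
        hsd₁, hsd₂, hqdef]
      noncomm_ring
    have hqq : star (inner A y₁ x : A) * (inner A y₁ x : A) +
        star (inner A y₂ x : A) * (inner A y₂ x : A) = q := by
      rw [hxy₁, hxy₂, star_star, star_star, hqdef]
    rw [hinner, hqq]
    have hstarcq : star (c * q) = q * c := by rw [star_mul, hcsa, hqsa.star_eq]
    have h2 : star (c * q) * (c * q) = cfc (fun t => (t * f t) * (f t * t)) q := by
      rw [hstarcq, hcdef,
        cfc_mul (fun t => t * f t) (fun t => f t * t) q (hid.mul hfon) (hfon.mul hid),
        cfc_mul (fun t : ℝ => t) f q hid hfon,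
        cfc_mul f (fun t : ℝ => t) q hfon hid, cfc_id' ℝ (a := q) hqsa]
    rw [h2]
    have key : q - cfc (fun t => (t * f t) * (f t * t)) q ≤ ε • (1 : A) := by
      have hsub : q - cfc (fun t => (t * f t) * (f t * t)) q =
          cfc (fun t => t - (t * f t) * (f t * t)) q := by
        rw [cfc_sub (fun t : ℝ => t) (fun t => (t * f t) * (f t * t)) q hid
          ((hid.mul hfon).mul (hfon.mul hid)), cfc_id' ℝ (a := q) hqsa]
      rw [hsub]
      calc cfc (fun t => t - (t * f t) * (f t * t)) q
          ≤ cfc (fun _ : ℝ => ε) q := by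
            refine cfc_mono (fun t ht => ?_) (hid.sub ((hid.mul hfon).mul (hfon.mul hid))) continuousOn_const
            have ht0 : 0 ≤ t := spectrum_nonneg_of_nonneg hq ht
            have htN : t ≤ N := by
              have := spectrum.norm_le_norm_of_mem ht
              rwa [Real.norm_eq_abs, abs_of_nonneg ht0] at this
            set s : ℝ := Real.sqrt t with hs
            have hs0 : 0 ≤ s := Real.sqrt_nonneg t
            have hs2 : s ^ 2 = t := Real.sq_sqrt ht0
            have hsN : s ≤ Real.sqrt N := Real.sqrt_le_sqrt htN
            have hu : 0 < s + ε₀ := by positivity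
            have hval : (t * f t) * (f t * t) = t ^ 2 / (s + ε₀) ^ 2 := by
              simp only [hfdef]
              rw [eq_div_iff (by positivity)]
              field_simp
              ring
            rw [hval, sub_le_iff_le_add, ← sub_le_iff_le_add', le_div_iff₀ (by positivity)]
            nlinarith [mul_nonneg (mul_nonneg hs0 hs0) hε₀.le, mul_nonneg hs0 (mul_nonneg hε₀.le hε₀.le),
              mul_le_mul_of_nonneg_right hsN (sq_nonneg (s + ε₀)),
              mul_nonneg (mul_nonneg hs0 hs0) (mul_nonneg hs0 hε₀.le), sq_nonneg (s + ε₀), hεeq]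
          _ = ε • (1 : A) := by
            rw [cfc_const ε q hqsa, Algebra.algebraMap_eq_smul_one]
    exact sub_le_comm.mp key
end

section
/- Let X = X₁ ⊕ ⋯ ⊕ Xₙ be a direct sum decomposition of the Hilbert 𝔄-module X. Then the decomposition is hermitian if and only if the submodules are pairwise orthogonal, i.e. ⟨x,y⟩ = 0 for all x ∈ Xᵢ, y ∈ Xⱼ with i ≠ j. -/
open scoped RightActions

/-- The definition of a Hilbert C⋆-module as a *right* module (`SMul Aᵐᵒᵖ E`) that Mathlib's
`CStarModule` had in December 2024 (Mathlib's class now uses a left action `SMul A E`). -/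
class OldCStarModule (A E : Type*) [NonUnitalSemiring A] [StarRing A] [Module ℂ A]
    [AddCommGroup E] [Module ℂ E] [PartialOrder A] [SMul Aᵐᵒᵖ E] [Norm A] [Norm E]
    extends Inner A E where
  inner_add_right {x} {y} {z} : inner x (y + z) = inner x y + inner x z
  inner_self_nonneg {x} : 0 ≤ inner x x
  inner_self {x} : inner x x = 0 ↔ x = 0
  inner_op_smul_right {a : A} {x y : E} : inner x (y <• a) = inner x y * a
  inner_smul_right_complex {z : ℂ} {x} {y} : inner x (z • y) = z • inner x y
  star_inner x y : star (inner x y) = inner y x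
  norm_eq_sqrt_norm_inner_self x : ‖x‖ = √‖inner x x‖

variable {A : Type*} [NonUnitalCStarAlgebra A] [PartialOrder A] [StarOrderedRing A]
  {E : Type*} [NormedAddCommGroup E] [Module ℂ E] [SMul Aᵐᵒᵖ E] [OldCStarModule A E]

namespace OldCStarModule

variable {A : Type*} [NonUnitalCStarAlgebra A] [PartialOrder A]
  {E : Type*} [NormedAddCommGroup E] [Module ℂ E] [SMul Aᵐᵒᵖ E] [OldCStarModule A E]

/-- inner product as additive hom in the second variable -/
def innerR (x : E) : E →+ A where
  toFun y := inner A x y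
  map_zero' := by
    have h := (inner_add_right (A := A) (x := x) (y := (0:E)) (z := 0))
    rw [add_zero] at h
    simpa using h
  map_add' _ _ := inner_add_right

lemma inner_zero_right {x : E} : inner A x (0:E) = 0 := (innerR (A := A) x).map_zero

lemma inner_sub_right {x y z : E} : inner A x (y - z) = inner A x y - inner A x z :=
  (innerR (A := A) x).map_sub y z

lemma inner_add_left {x y z : E} : inner A (x + y) z = inner A x z + inner A y z := by
  rw [← star_inner, inner_add_right, star_add, star_inner, star_inner]

lemma inner_sub_left {x y z : E} : inner A (x - y) z = inner A x z - inner A y z := by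
  rw [← star_inner, inner_sub_right, star_sub, star_inner, star_inner]

lemma inner_sum_right {ι : Type*} {s : Finset ι} {x : E} {y : ι → E} :
    inner A x (∑ i ∈ s, y i) = ∑ i ∈ s, inner A x (y i) :=
  map_sum (innerR (A := A) x) y s

lemma inner_sum_left {ι : Type*} {s : Finset ι} {x : ι → E} {y : E} :
    inner A (∑ i ∈ s, x i) y = ∑ i ∈ s, inner A (x i) y := by
  rw [← star_inner, inner_sum_right, star_sum]
  simp only [star_inner]

lemma inner_smul_left_complex {z : ℂ} {x y : E} : inner A (z • x) y = star z • inner A x y := by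
  rw [← star_inner, inner_smul_right_complex, star_smul, star_inner]

lemma inner_smul_right_real {r : ℝ} {x y : E} : inner A x (r • y) = r • inner A x y := by
  rw [← Complex.coe_smul, inner_smul_right_complex, Complex.coe_smul]

lemma inner_smul_left_real {r : ℝ} {x y : E} : inner A (r • x) y = r • inner A x y := by
  rw [← Complex.coe_smul, inner_smul_left_complex, Complex.star_def, Complex.conj_ofReal,
    Complex.coe_smul]

lemma norm_sq_eq (x : E) : ‖x‖ ^ 2 = ‖inner A x x‖ := by
  rw [norm_eq_sqrt_norm_inner_self (A := A) x, Real.sq_sqrt (norm_nonneg _)]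

end OldCStarModule

open OldCStarModule

/-- A direct sum decomposition `X = X₁ ⊕ ⋯ ⊕ Xₙ` of a Hilbert C*-module into closed,
`𝔄`-invariant, orthogonally complemented submodules with unique representations is hermitian
if and only if the submodules are pairwise orthogonal. -/
theorem hermitian_iff_pairwise_orthogonal [CompleteSpace E]
    (n : ℕ) (Y : Fin n → Submodule ℂ E)
    (hclosed : ∀ i, IsClosed (Y i : Set E))
    (hsmul : ∀ i, ∀ (a : A), ∀ y ∈ Y i, MulOpposite.op a • y ∈ Y i)
    (hcompl : ∀ i, ∀ v : E, ∃ y z : E, y ∈ Y i ∧ v = y + z ∧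
      ∀ y' ∈ Y i, (inner A y' z : A) = 0)
    (huniq : ∀ v : E, ∃! f : Fin n → E, (∀ i, f i ∈ Y i) ∧ ∑ i, f i = v) :
    (∀ (α : Fin n → ℂ), (∀ i, ‖α i‖ = 1) → ∀ f : Fin n → E, (∀ i, f i ∈ Y i) →
        ‖∑ i, α i • f i‖ = ‖∑ i, f i‖) ↔
      (∀ i j, i ≠ j → ∀ x ∈ Y i, ∀ y ∈ Y j, (inner A x y : A) = 0) := by
  classical
  constructor
  · intro hherm i j hij x hx y hy
    obtain ⟨u, z, hu, hyz, hz⟩ := hcompl i y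
    have huz : (inner A u z : A) = 0 := hz u hu
    have hzu : (inner A z u : A) = 0 := by
      rw [← star_inner, huz, star_zero]
    set U : A := inner A u u with hU
    set Z : A := inner A z z with hZ
    have hU0 : (0:A) ≤ U := inner_self_nonneg
    have hZ0 : (0:A) ≤ Z := inner_self_nonneg
    have key : ∀ m : ℝ, ‖((m-1)*(m-1)) • U + Z‖ = ‖((m+1)*(m+1)) • U + Z‖ := by
      intro m
      set f : Fin n → E := fun k => if k = i then (m:ℝ) • u else if k = j then y else 0 with hf
      set α : Fin n → ℂ := fun k => if k = j then -1 else 1 with hα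
      have hmem : ∀ k, f k ∈ Y k := by
        intro k
        by_cases h1 : k = i
        · subst h1; simpa [hf] using Submodule.smul_of_tower_mem _ (m:ℝ) hu
        · by_cases h2 : k = j
          · subst h2; simpa [hf, h1] using hy
          · simp [hf, h1, h2]
      have hαnorm : ∀ k, ‖α k‖ = 1 := by
        intro k; by_cases h : k = j <;> simp [hα, h]
      have hnorm := hherm α hαnorm f hmem
      have hsum1 : ∑ k, f k = (m:ℝ) • u + y := by
        rw [Finset.sum_eq_add_of_mem i j (Finset.mem_univ _) (Finset.mem_univ _) hij ?_]
        · simp [hf, hij.symm]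
        · intro c _ hc; simp [hf, hc.1, hc.2]
      have hsum2 : ∑ k, α k • f k = (m:ℝ) • u - y := by
        rw [Finset.sum_eq_add_of_mem i j (Finset.mem_univ _) (Finset.mem_univ _) hij ?_]
        · simp [hf, hα, hij, hij.symm, sub_eq_add_neg]
        · intro c _ hc; simp [hf, hc.1, hc.2]
      rw [hsum1, hsum2] at hnorm
      have e1 : (inner A ((m:ℝ) • u - y) ((m:ℝ) • u - y) : A) = ((m-1)*(m-1)) • U + Z := by
        rw [hyz]
        simp only [OldCStarModule.inner_sub_left, OldCStarModule.inner_sub_right, OldCStarModule.inner_add_left, OldCStarModule.inner_add_right,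
          inner_smul_left_real, inner_smul_right_real, huz, hzu, ← hU, ← hZ,
          smul_zero, add_zero, zero_add, smul_smul]
        module
      have e2 : (inner A ((m:ℝ) • u + y) ((m:ℝ) • u + y) : A) = ((m+1)*(m+1)) • U + Z := by
        rw [hyz]
        simp only [OldCStarModule.inner_add_left, OldCStarModule.inner_add_right,
          inner_smul_left_real, inner_smul_right_real, huz, hzu, ← hU, ← hZ,
          smul_zero, add_zero, zero_add, smul_smul]
        module
      have h1 : ‖((m-1)*(m-1)) • U + Z‖ = ‖(m:ℝ) • u - y‖ ^ 2 := by
        rw [norm_sq_eq (A := A), e1]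
      have h2 : ‖((m+1)*(m+1)) • U + Z‖ = ‖(m:ℝ) • u + y‖ ^ 2 := by
        rw [norm_sq_eq (A := A), e2]
      rw [h1, h2, hnorm]
    have base : ∀ k : ℕ, ‖((2*(k:ℝ))*(2*(k:ℝ))) • U + Z‖ = ‖Z‖ := by
      intro k
      induction k with
      | zero => norm_num
      | succ k ih =>
        have hk := key (2*(k:ℕ)+1)
        have e1 : ((2*(k:ℝ)+1-1)*(2*(k:ℝ)+1-1)) = (2*(k:ℝ))*(2*(k:ℝ)) := by ring
        have e2 : ((2*(k:ℝ)+1+1)*(2*(k:ℝ)+1+1)) = (2*((k:ℝ)+1))*(2*((k:ℝ)+1)) := by ring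
        rw [e1, e2] at hk
        push_cast
        rw [← hk, ih]
    have hbound : ∀ k : ℕ, ((2*(k:ℝ))*(2*(k:ℝ))) * ‖U‖ ≤ ‖Z‖ := by
      intro k
      have h0 : (0:A) ≤ ((2*(k:ℝ))*(2*(k:ℝ))) • U := smul_nonneg (by positivity) hU0
      have hle : ((2*(k:ℝ))*(2*(k:ℝ))) • U ≤ ((2*(k:ℝ))*(2*(k:ℝ))) • U + Z :=
        le_add_of_nonneg_right hZ0
      calc ((2*(k:ℝ))*(2*(k:ℝ))) * ‖U‖ = ‖((2*(k:ℝ))*(2*(k:ℝ))) • U‖ := by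
            rw [norm_smul, Real.norm_eq_abs, abs_of_nonneg (by positivity : (0:ℝ) ≤ 2*(k:ℝ)*(2*(k:ℝ)))]
        _ ≤ ‖((2*(k:ℝ))*(2*(k:ℝ))) • U + Z‖ :=
            CStarAlgebra.norm_le_norm_of_nonneg_of_le h0 hle
        _ = ‖Z‖ := base k
    have hUzero : ‖U‖ = 0 := by
      by_contra h
      have hpos : 0 < ‖U‖ := lt_of_le_of_ne (norm_nonneg _) (Ne.symm h)
      obtain ⟨k, hk⟩ := exists_nat_gt (‖Z‖ / ‖U‖)
      have hb := hbound k
      have : ‖Z‖ / ‖U‖ < (k:ℝ) := hk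
      rw [div_lt_iff₀ hpos] at this
      have hk1 : (1:ℝ) ≤ (k:ℝ) := by
        have h0 : (0:ℝ) ≤ ‖Z‖ / ‖U‖ := by positivity
        have : (0:ℝ) < (k:ℝ) := lt_of_le_of_lt h0 hk
        exact_mod_cast Nat.one_le_iff_ne_zero.mpr (by exact_mod_cast this.ne')
      have h4 : (k:ℝ) * ‖U‖ ≤ 2*(k:ℝ)*(2*(k:ℝ))*‖U‖ := by
        have h5 : (k:ℝ) ≤ 2*(k:ℝ)*(2*(k:ℝ)) := by nlinarith
        exact mul_le_mul_of_nonneg_right h5 (norm_nonneg _)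
      linarith
    have hu0 : u = 0 := by
      have : ‖u‖ ^ 2 = 0 := by rw [norm_sq_eq (A := A), ← hU, hUzero]
      have := pow_eq_zero_iff (n := 2) (by norm_num) |>.mp this
      exact norm_eq_zero.mp this
    rw [hyz, OldCStarModule.inner_add_right, hu0, OldCStarModule.inner_zero_right, zero_add]
    exact hz x hx
  · intro horth α hα f hf
    have key : ∀ (β : Fin n → ℂ), (∀ k, ‖β k‖ = 1) →
        (inner A (∑ k, β k • f k) (∑ k, β k • f k) : A) = ∑ k, (inner A (f k) (f k) : A) := by
      intro β hβ
      rw [inner_sum_left]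
      refine Finset.sum_congr rfl fun k _ => ?_
      rw [inner_sum_right]
      rw [Finset.sum_eq_single k]
      · have hc : β k * star (β k) = 1 := by
          rw [Complex.star_def, Complex.mul_conj]
          norm_cast
          rw [Complex.normSq_eq_norm_sq, hβ k]; norm_num
        rw [inner_smul_left_complex, inner_smul_right_complex, smul_smul, mul_comm, hc, one_smul]
      · intro l _ hlk
        rw [inner_smul_left_complex, inner_smul_right_complex,
          horth k l (Ne.symm hlk) (f k) (hf k) (f l) (hf l), smul_zero, smul_zero]
      · intro h; exact absurd (Finset.mem_univ k) h
    have h1 := key α hα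
    have h2 := key (fun _ => 1) (fun _ => by norm_num)
    simp only [one_smul] at h2
    have : ‖∑ k, α k • f k‖ ^ 2 = ‖∑ k, f k‖ ^ 2 := by
      rw [norm_sq_eq (A := A), norm_sq_eq (A := A), h1, h2]
    have hv := norm_nonneg (∑ k, α k • f k)
    have hw := norm_nonneg (∑ k, f k)
    nlinarith
end

section
/- Let X = X₁ ⊕ ⋯ ⊕ Xₙ be a direct sum decomposition of the Hilbert 𝔄-module X whose submodules are pairwise orthogonal (⟨x,y⟩ = 0 for x ∈ Xᵢ, y ∈ Xⱼ, i ≠ j). Then the decomposition is orthogonal with respect to (‖·‖*ₙ): for every xᵢ ∈ Xᵢ (1 ≤ i ≤ n) and every partition {S₁,…,S_m} of {1,…,n}, setting yⱼ = Σ_{i∈Sⱼ} xᵢ, one has ‖(y₁,…,y_m)‖*_m = ‖(x₁,…,xₙ)‖*ₙ; in particular ‖(x₁,…,xₙ)‖*ₙ = ‖x₁ + ⋯ + xₙ‖. -/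
open scoped RightActions

/-- The Mathlib (Dec 2024) class `CStarModule`, with a right `A`-action via `Aᵐᵒᵖ`. -/
class CStarModuleRight (A : outParam <| Type*) (E : Type*) [NonUnitalSemiring A] [StarRing A]
    [Module ℂ A] [AddCommGroup E] [Module ℂ E] [PartialOrder A] [SMul Aᵐᵒᵖ E] [Norm A] [Norm E]
    extends Inner A E where
  inner_add_right {x} {y} {z} : inner x (y + z) = inner x y + inner x z
  inner_self_nonneg {x} : 0 ≤ inner x x
  inner_self {x} : inner x x = 0 ↔ x = 0
  inner_op_smul_right {a : A} {x y : E} : inner x (y <• a) = inner x y * a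
  inner_smul_right_complex {z : ℂ} {x} {y} : inner x (z • y) = z • inner x y
  star_inner x y : star (inner x y) = inner y x
  norm_eq_sqrt_norm_inner_self x : ‖x‖ = √‖inner x x‖

variable (A : Type*) {E : Type*} [NonUnitalCStarAlgebra A] [PartialOrder A] [StarOrderedRing A]
  [NormedAddCommGroup E] [Module ℂ E] [SMul Aᵐᵒᵖ E] [CStarModuleRight A E]

/-- `μ*ₙ(y₁,…,yₙ) = sup { ‖(Σᵢ |⟨yᵢ,z⟩|²)^{1/2}‖ : z ∈ X, ‖z‖ ≤ 1 }`. -/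
noncomputable def mustar (n : ℕ) (y : Fin n → E) : ℝ :=
  sSup {r : ℝ | ∃ z : E, ‖z‖ ≤ 1 ∧
    r = Real.sqrt ‖∑ i, star (inner A (y i) z) * (inner A (y i) z)‖}

/-- `‖x‖*ₙ = sup { ‖Σᵢ |⟨yᵢ,xᵢ⟩|²‖^{1/2} : μ*ₙ(y₁,…,yₙ) ≤ 1 }`. -/
noncomputable def starNorm (n : ℕ) (x : Fin n → E) : ℝ :=
  sSup {r : ℝ | ∃ y : Fin n → E, mustar A n y ≤ 1 ∧
    r = Real.sqrt ‖∑ i, star (inner A (y i) (x i)) * (inner A (y i) (x i))‖}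

namespace CStarModuleRight

section aux

variable {A : Type*} {E : Type*} [NonUnitalCStarAlgebra A] [PartialOrder A] [StarOrderedRing A]
  [NormedAddCommGroup E] [Module ℂ E] [SMul Aᵐᵒᵖ E] [CStarModuleRight A E]

attribute [simp] CStarModuleRight.inner_add_right CStarModuleRight.star_inner
  CStarModuleRight.inner_op_smul_right CStarModuleRight.inner_smul_right_complex

@[simp]
lemma inner_add_left {x y z : E} : inner A (x + y) z = inner A x z + inner A y z := by
  rw [← star_star (r := inner A (x + y) z)]
  simp only [inner_add_right, star_add, star_inner]

@[simp]
lemma inner_op_smul_left {a : A} {x y : E} : inner A (x <• a) y = star a * inner A x y := by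
  rw [← star_inner]; simp

@[simp]
lemma inner_smul_left_complex {z : ℂ} {x y : E} : inner A (z • x) y = star z • inner A x y := by
  rw [← star_inner]
  simp

@[simp]
lemma inner_smul_left_real {z : ℝ} {x y : E} : inner A (z • x) y = z • inner A x y := by
  have h₁ : z • x = (z : ℂ) • x := by simp
  rw [h₁, ← star_inner, inner_smul_right_complex]
  simp

@[simp]
lemma inner_smul_right_real {z : ℝ} {x y : E} : inner A x (z • y) = z • inner A x y := by
  have h₁ : z • y = (z : ℂ) • y := by simp
  rw [h₁, ← star_inner, inner_smul_left_complex]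
  simp

/-- The function `⟨x, y⟩ ↦ ⟪x, y⟫` bundled as a sesquilinear map. -/
def innerₛₗ : E →ₗ⋆[ℂ] E →ₗ[ℂ] A where
  toFun x := { toFun := fun y => inner A x y
               map_add' := fun z y => by simp
               map_smul' := fun z y => by simp }
  map_add' z y := by ext; simp
  map_smul' z y := by ext; simp

lemma innerₛₗ_apply {x y : E} : innerₛₗ x y = inner A x y := rfl

@[simp] lemma inner_zero_right {x : E} : inner A x 0 = 0 := by simp [← innerₛₗ_apply]
@[simp] lemma inner_zero_left {x : E} : inner A 0 x = 0 := by simp [← innerₛₗ_apply]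
@[simp] lemma inner_sub_right {x y z : E} : inner A x (y - z) = inner A x y - inner A x z := by
  simp [← innerₛₗ_apply]
@[simp] lemma inner_sub_left {x y z : E} : inner A (x - y) z = inner A x z - inner A y z := by
  simp [← innerₛₗ_apply]

@[simp]
lemma inner_sum_right {ι : Type*} {s : Finset ι} {x : E} {y : ι → E} :
    inner A x (∑ i ∈ s, y i) = ∑ i ∈ s, inner A x (y i) :=
  map_sum (innerₛₗ x) ..

@[simp]
lemma inner_sum_left {ι : Type*} {s : Finset ι} {x : ι → E} {y : E} :
    inner A (∑ i ∈ s, x i) y = ∑ i ∈ s, inner A (x i) y :=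
  map_sum (innerₛₗ.flip y) ..

lemma norm_sq_eq {x : E} : ‖x‖ ^ 2 = ‖inner A x x‖ := by
  simp [norm_eq_sqrt_norm_inner_self (A := A)]

lemma inner_mul_inner_swap_le {x y : E} : inner A y x * inner A x y ≤ ‖x‖ ^ 2 • inner A y y := by
  rcases eq_or_ne x 0 with h | h
  · simp [h]
  · have h₁ : ∀ (a : A),
        (0 : A) ≤ ‖x‖ ^ 2 • (star a * a) - ‖x‖ ^ 2 • (star a * inner A x y)
                  - ‖x‖ ^ 2 • (inner A y x * a) + ‖x‖ ^ 2 • (‖x‖ ^ 2 • inner A y y) := fun a => by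
      calc (0 : A) ≤ inner A (x <• a - ‖x‖ ^ 2 • y) (x <• a - ‖x‖ ^ 2 • y) := inner_self_nonneg
           _ = star a * inner A x x * a - ‖x‖ ^ 2 • (star a * inner A x y)
                  - ‖x‖ ^ 2 • (inner A y x * a) + ‖x‖ ^ 2 • (‖x‖ ^ 2 • inner A y y) := by
                      simp only [inner_sub_right, inner_op_smul_right, inner_sub_left,
                        inner_op_smul_left, inner_smul_left_real, mul_sub, smul_mul_assoc,
                        inner_smul_right_real, smul_sub, mul_assoc, sub_mul]
                      abel
           _ ≤ ‖x‖ ^ 2 • (star a * a) - ‖x‖ ^ 2 • (star a * inner A x y)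
                  - ‖x‖ ^ 2 • (inner A y x * a) + ‖x‖ ^ 2 • (‖x‖ ^ 2 • inner A y y) := by
                      gcongr
                      calc _ ≤ ‖inner A x x‖ • (star a * a) :=
                          CStarAlgebra.star_left_conjugate_le_norm_smul (star_inner x x)
                        _ = (√‖inner A x x‖) ^ 2 • (star a * a) := by
                          rw [Real.sq_sqrt]
                          positivity
                        _ = ‖x‖ ^ 2 • (star a * a) := by rw [← norm_eq_sqrt_norm_inner_self]
    specialize h₁ (inner A x y)
    simp only [star_inner, sub_self, zero_sub, le_neg_add_iff_add_le, add_zero] at h₁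
    rwa [smul_le_smul_iff_of_pos_left (pow_pos (norm_pos_iff.mpr h) _)] at h₁

variable (E) in
lemma norm_inner_le {x y : E} : ‖inner A x y‖ ≤ ‖x‖ * ‖y‖ := by
  have := calc ‖inner A x y‖ ^ 2 = ‖inner A y x * inner A x y‖ := by
                rw [← star_inner x y, CStarRing.norm_star_mul_self, pow_two]
    _ ≤ ‖‖x‖ ^ 2 • inner A y y‖ := by
                refine CStarAlgebra.norm_le_norm_of_nonneg_of_le ?_ inner_mul_inner_swap_le
                rw [← star_inner x y]
                exact star_mul_self_nonneg (inner A x y)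
    _ = ‖x‖ ^ 2 * ‖inner A y y‖ := by simp [norm_smul]
    _ = ‖x‖ ^ 2 * ‖y‖ ^ 2 := by
                simp only [norm_eq_sqrt_norm_inner_self (A := A) y, norm_nonneg, Real.sq_sqrt]
    _ = (‖x‖ * ‖y‖) ^ 2 := by simp only [mul_pow]
  refine (pow_le_pow_iff_left₀ (norm_nonneg (inner A x y)) ?_ (by simp)).mp this
  exact mul_nonneg (norm_nonneg _) (norm_nonneg _)

end aux

lemma normedSpaceCore {A : Type*} {E : Type*} [NonUnitalCStarAlgebra A] [PartialOrder A]
    [StarOrderedRing A]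
    [NormedAddCommGroup E] [Module ℂ E] [SMul Aᵐᵒᵖ E] [CStarModuleRight A E] :
    NormedSpace.Core ℂ E where
  norm_nonneg _ := norm_nonneg _
  norm_eq_zero_iff _ := norm_eq_zero
  norm_smul c x := by
    rw [norm_eq_sqrt_norm_inner_self (A := A) (c • x), norm_eq_sqrt_norm_inner_self (A := A) x,
      inner_smul_left_complex, inner_smul_right_complex, smul_smul, norm_smul, norm_mul, norm_star,
      Real.sqrt_mul (by positivity), Real.sqrt_mul_self (norm_nonneg _)]
  norm_triangle x y := norm_add_le x y

end CStarModuleRight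

namespace StarNormAux

open CStarModuleRight Finset

variable {A}

/-- The positive element `Σᵢ |⟨yᵢ,z⟩|²`. -/
noncomputable def G {n : ℕ} (y : Fin n → E) (z : E) : A :=
  ∑ i, star (inner A (y i) z : A) * (inner A (y i) z : A)

lemma G_nonneg {n : ℕ} (y : Fin n → E) (z : E) : 0 ≤ G (A := A) y z :=
  Finset.sum_nonneg fun i _ => star_mul_self_nonneg _

lemma mustar_eq (n : ℕ) (y : Fin n → E) :
    mustar A n y = sSup {r : ℝ | ∃ z : E, ‖z‖ ≤ 1 ∧ r = Real.sqrt ‖G (A := A) y z‖} := rfl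

lemma bddAbove_mustar_set (n : ℕ) (y : Fin n → E) :
    BddAbove {r : ℝ | ∃ z : E, ‖z‖ ≤ 1 ∧ r = Real.sqrt ‖G (A := A) y z‖} := by
  refine ⟨Real.sqrt (∑ i, ‖y i‖ ^ 2), ?_⟩
  rintro r ⟨z, hz, rfl⟩
  refine Real.sqrt_le_sqrt ?_
  calc ‖G (A := A) y z‖ ≤ ∑ i, ‖star (inner A (y i) z : A) * (inner A (y i) z : A)‖ :=
        norm_sum_le _ _
    _ ≤ ∑ i, ‖y i‖ ^ 2 := by
        refine Finset.sum_le_sum fun i _ => ?_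
        calc ‖star (inner A (y i) z : A) * (inner A (y i) z : A)‖
            = ‖(inner A (y i) z : A)‖ ^ 2 := by
              rw [CStarRing.norm_star_mul_self, sq]
          _ ≤ (‖y i‖ * ‖z‖) ^ 2 := by
              gcongr
              exact norm_inner_le E
          _ ≤ (‖y i‖ * 1) ^ 2 := by gcongr
          _ = ‖y i‖ ^ 2 := by ring_nf

lemma sqrt_norm_G_le_mustar {n : ℕ} {y : Fin n → E} {z : E} (hz : ‖z‖ ≤ 1) :
    Real.sqrt ‖G (A := A) y z‖ ≤ mustar A n y :=
  le_csSup (bddAbove_mustar_set n y) ⟨z, hz, rfl⟩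

lemma mustar_nonneg (n : ℕ) (y : Fin n → E) : 0 ≤ mustar A n y := by
  have h := sqrt_norm_G_le_mustar (A := A) (y := y) (z := (0 : E)) (by simp)
  exact le_trans (Real.sqrt_nonneg _) h

lemma G_smul {n : ℕ} (y : Fin n → E) (z : E) (c : ℂ) :
    G (A := A) y (c • z) = (star c * c) • G (A := A) y z := by
  simp only [G, Finset.smul_sum]
  refine Finset.sum_congr rfl fun i _ => ?_
  rw [inner_smul_right_complex, star_smul, smul_mul_smul_comm]

lemma norm_G_le_of_mustar_le_one {n : ℕ} {y : Fin n → E} (h : mustar A n y ≤ 1) (z : E) :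
    ‖G (A := A) y z‖ ≤ ‖z‖ ^ 2 := by
  have hcore := CStarModuleRight.normedSpaceCore (A := A) (E := E)
  rcases eq_or_ne z 0 with rfl | hz
  · simp [G]
  · have hnz : (0 : ℝ) < ‖z‖ := norm_pos_iff.mpr hz
    set z' : E := ((‖z‖ : ℂ))⁻¹ • z with hz'
    have hz'1 : ‖z'‖ ≤ 1 := by
      rw [hz', hcore.norm_smul]
      simp only [norm_inv, Complex.norm_real, Real.norm_eq_abs, abs_of_pos hnz]
      rw [inv_mul_cancel₀ hnz.ne']
    have h1 : Real.sqrt ‖G (A := A) y z'‖ ≤ 1 := le_trans (sqrt_norm_G_le_mustar hz'1) h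
    have h2 : ‖G (A := A) y z'‖ ≤ 1 := by
      nlinarith [Real.sq_sqrt (norm_nonneg (G (A := A) y z')), Real.sqrt_nonneg ‖G (A := A) y z'‖]
    have h4 : ‖G (A := A) y z'‖ = ‖z‖⁻¹ * ‖z‖⁻¹ * ‖G (A := A) y z‖ := by
      rw [hz', G_smul, norm_smul]
      rw [CStarRing.norm_star_mul_self]
      simp only [norm_inv, Complex.norm_real, Real.norm_eq_abs, abs_of_pos hnz]
      try ring
    rw [h4] at h2
    have := mul_le_mul_of_nonneg_left h2 (le_of_lt (mul_pos hnz hnz))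
    calc ‖G (A := A) y z‖ = (‖z‖ * ‖z‖) * (‖z‖⁻¹ * ‖z‖⁻¹ * ‖G (A := A) y z‖) := by
          field_simp
        _ ≤ (‖z‖ * ‖z‖) * 1 := by gcongr
        _ = ‖z‖ ^ 2 := by ring

lemma mustar_le_one {n : ℕ} {y : Fin n → E}
    (h : ∀ z : E, ‖z‖ ≤ 1 → ‖G (A := A) y z‖ ≤ 1) : mustar A n y ≤ 1 := by
  refine Real.sSup_le ?_ zero_le_one
  rintro r ⟨z, hz, rfl⟩
  rw [show (1:ℝ) = Real.sqrt 1 by simp]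
  exact Real.sqrt_le_sqrt (h z hz)

/-- If all conjugates of `a` have smaller norm than the conjugates of `h`, then `a ≤ h`.  -/
lemma le_of_forall_conjugate_norm_le {B : Type*} [CStarAlgebra B] [PartialOrder B]
    [StarOrderedRing B] {a h : B} (ha : 0 ≤ a) (hh : 0 ≤ h)
    (H : ∀ e : B, ‖star e * a * e‖ ≤ ‖star e * h * e‖) : a ≤ h := by
  have hsa : IsSelfAdjoint a := .of_nonneg ha
  have hsh : IsSelfAdjoint h := .of_nonneg hh
  have key : ∀ ε : ℝ, 0 < ε → a ≤ h + algebraMap ℝ B ε := by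
    intro ε hε
    have hspec : ∀ t ∈ spectrum ℝ h, 0 ≤ t := fun t ht => spectrum_nonneg_of_nonneg hh ht
    have hpos : ∀ t ∈ spectrum ℝ h, 0 < t + ε := fun t ht => by
      have := hspec t ht; linarith
    set f : ℝ → ℝ := fun t => (Real.sqrt (t + ε))⁻¹ with hfdef
    set g : ℝ → ℝ := fun t => Real.sqrt (t + ε) with hgdef
    have hcg : ContinuousOn g (spectrum ℝ h) :=
      (Real.continuous_sqrt.comp (continuous_id.add continuous_const)).continuousOn
    have hsne : ∀ t ∈ spectrum ℝ h, Real.sqrt (t + ε) ≠ 0 := by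
      intro t ht
      simpa [Real.sqrt_ne_zero'] using hpos t ht
    have hcf : ContinuousOn f (spectrum ℝ h) := ContinuousOn.inv₀ hcg hsne
    set e : B := cfc f h with hedef
    set e' : B := cfc g h with he'def
    have hesa : IsSelfAdjoint e := cfc_predicate f h
    have he'sa : IsSelfAdjoint e' := cfc_predicate g h
    have e_h : e * h = cfc (fun t => f t * t) h := by
      have h2 := cfc_mul f id h hcf continuousOn_id
      rw [cfc_id ℝ h] at h2
      exact h2.symm
    have e_h_e : e * h * e = cfc (fun t => f t * t * f t) h := by
      rw [e_h, hedef]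
      exact (cfc_mul _ f h (hcf.mul continuousOn_id) hcf).symm
    have hnorm_ehe : ‖e * h * e‖ ≤ 1 := by
      rw [e_h_e]
      apply norm_cfc_le zero_le_one
      intro t ht
      have hs : Real.sqrt (t + ε) * Real.sqrt (t + ε) = t + ε :=
        Real.mul_self_sqrt (hpos t ht).le
      have h1 : f t * t * f t = t / (t + ε) := by
        calc f t * t * f t = t * (Real.sqrt (t + ε) * Real.sqrt (t + ε))⁻¹ := by
              rw [hfdef, mul_inv]; ring
          _ = t / (t + ε) := by rw [hs, div_eq_mul_inv]
      rw [h1, Real.norm_eq_abs, abs_of_nonneg (div_nonneg (hspec t ht) (hpos t ht).le)]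
      rw [div_le_one (hpos t ht)]
      linarith
    have hea : 0 ≤ e * a * e := by
      have := star_left_conjugate_nonneg ha e
      rwa [hesa.star_eq] at this
    have heae_le : e * a * e ≤ 1 := by
      rw [← CStarAlgebra.norm_le_one_iff_of_nonneg _ hea]
      have := H e
      rw [hesa.star_eq] at this
      exact this.trans hnorm_ehe
    have conj := IsSelfAdjoint.conjugate_le_conjugate heae_le he'sa
    have he'e : e' * e = 1 := by
      rw [he'def, hedef, ← cfc_mul g f h hcg hcf]
      have heq : (spectrum ℝ h).EqOn (fun t => g t * f t) 1 := fun t ht =>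
        mul_inv_cancel₀ (hsne t ht)
      rw [cfc_congr heq, cfc_one ℝ h]
    have hee' : e * e' = 1 := by
      rw [he'def, hedef, ← cfc_mul f g h hcf hcg]
      have heq : (spectrum ℝ h).EqOn (fun t => f t * g t) 1 := fun t ht =>
        inv_mul_cancel₀ (hsne t ht)
      rw [cfc_congr heq, cfc_one ℝ h]
    have lhs_eq : e' * (e * a * e) * e' = a := by
      have : e' * (e * a * e) * e' = (e' * e) * a * (e * e') := by noncomm_ring
      rw [this, he'e, hee', one_mul, mul_one]
    have rhs_eq : e' * 1 * e' = h + algebraMap ℝ B ε := by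
      rw [mul_one, he'def, ← cfc_mul g g h hcg hcg]
      have heq : (spectrum ℝ h).EqOn (fun t => g t * g t) (fun x => id x + (fun _ : ℝ => ε) x) :=
        fun t ht => Real.mul_self_sqrt (by have := hspec t ht; linarith)
      have hsum := cfc_add h id (fun _ : ℝ => ε) continuousOn_id continuousOn_const
      rw [cfc_id ℝ h, cfc_const ε h] at hsum
      rw [cfc_congr heq, hsum]
    rw [lhs_eq, rhs_eq] at conj
    exact conj
  have cont : Filter.Tendsto (fun ε : ℝ => h + algebraMap ℝ B ε - a)
      (nhdsWithin 0 (Set.Ioi 0)) (nhds (h - a)) := by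
    have hc : Continuous (fun ε : ℝ => h + algebraMap ℝ B ε - a) :=
      (continuous_const.add (continuous_algebraMap ℝ B)).sub continuous_const
    have h2 := (hc.tendsto 0).mono_left (nhdsWithin_le_nhds (s := Set.Ioi (0:ℝ)))
    simpa using h2
  have mem : ∀ᶠ ε in nhdsWithin (0:ℝ) (Set.Ioi 0),
      (fun ε : ℝ => h + algebraMap ℝ B ε - a) ε ∈ {x : B | 0 ≤ x} :=
    eventually_nhdsWithin_of_forall fun ε hε => sub_nonneg.mpr (key ε hε)
  have h0 : h - a ∈ {x : B | 0 ≤ x} :=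
    (CStarAlgebra.isClosed_nonneg).mem_of_tendsto cont mem
  exact sub_nonneg.mp h0

open Unitization in
/-- Paschke-type inequality: if the "column operator" of `y` is a contraction in norm, then
the corresponding operator inequality holds. -/
lemma G_le_inner_self {n : ℕ} {y : Fin n → E}
    (H : ∀ u : E, ‖G (A := A) y u‖ ≤ ‖u‖ ^ 2) (v : E) :
    G (A := A) y v ≤ (inner A v v : A) := by
  have ha : 0 ≤ G (A := A) y v := G_nonneg y v
  have hh : 0 ≤ (inner A v v : A) := CStarModuleRight.inner_self_nonneg
  rw [← Unitization.inr_le_iff _ _ (.of_nonneg ha) (.of_nonneg hh)]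
  apply le_of_forall_conjugate_norm_le (Unitization.inr_nonneg_iff.mpr ha)
    (Unitization.inr_nonneg_iff.mpr hh)
  intro e
  set u : E := e.fst • v + v <• e.snd with hudef
  have c1 : ∀ w : E, ((inner A w u : A) : Unitization ℂ A)
      = ((inner A w v : A) : Unitization ℂ A) * e := by
    intro w
    have h1 : (inner A w u : A) = e.fst • (inner A w v : A) + (inner A w v : A) * e.snd := by
      rw [hudef]
      simp
    rw [h1]
    refine Unitization.ext ?_ ?_
    · simp [Unitization.fst_mul]
    · simp [Unitization.snd_mul]
  have c1' : ∀ w : E, ((inner A u w : A) : Unitization ℂ A)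
      = star e * ((inner A v w : A) : Unitization ℂ A) := by
    intro w
    have := congrArg star (c1 w)
    rw [star_mul, ← Unitization.inr_star, ← Unitization.inr_star,
      CStarModuleRight.star_inner, CStarModuleRight.star_inner] at this
    exact this
  have c2 : ((inner A u u : A) : Unitization ℂ A)
      = star e * ((inner A v v : A) : Unitization ℂ A) * e := by
    rw [c1 u, c1' v]
  have c3 : star e * ((G (A := A) y v : A) : Unitization ℂ A) * e
      = ((G (A := A) y u : A) : Unitization ℂ A) := by
    have inr_sum : ∀ (f : Fin n → A), ((∑ i, f i : A) : Unitization ℂ A)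
        = ∑ i, ((f i : A) : Unitization ℂ A) := fun f => by
      exact map_sum (Unitization.inrNonUnitalStarAlgHom ℂ A) f Finset.univ
    simp only [G]
    rw [inr_sum, inr_sum, Finset.mul_sum, Finset.sum_mul]
    refine Finset.sum_congr rfl fun i _ => ?_
    rw [Unitization.inr_mul ℂ, Unitization.inr_mul ℂ, Unitization.inr_star, Unitization.inr_star,
      c1 (y i), star_mul]
    noncomm_ring
  rw [c3]
  calc ‖((G (A := A) y u : A) : Unitization ℂ A)‖ = ‖G (A := A) y u‖ :=
        Unitization.norm_inr _
    _ ≤ ‖u‖ ^ 2 := H u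
    _ = ‖(inner A u u : A)‖ := CStarModuleRight.norm_sq_eq
    _ = ‖((inner A u u : A) : Unitization ℂ A)‖ := (Unitization.norm_inr _).symm
    _ = ‖star e * ((inner A v v : A) : Unitization ℂ A) * e‖ := by rw [c2]

section Main

variable {m : ℕ} (w : Fin m → E) (Q : Fin m → E → E)

lemma value_le (hq1 : ∀ j (u v : E), (inner A (Q j u) v : A) = inner A u (Q j v))
    (hq2 : ∀ j k, Q j (w k) = if j = k then w k else 0)
    (hq3 : ∀ z : E, ∑ j, (inner A (Q j z) (Q j z) : A) = inner A z z)
    {y : Fin m → E} (hy : mustar A m y ≤ 1) :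
    ‖∑ j, star (inner A (y j) (w j) : A) * (inner A (y j) (w j) : A)‖ ≤ ‖∑ j, w j‖ ^ 2 := by
  set s : E := ∑ j, w j with hsdef
  have H : ∀ u : E, ‖G (A := A) y u‖ ≤ ‖u‖ ^ 2 := fun u => norm_G_le_of_mustar_le_one hy u
  have P := G_le_inner_self (A := A) H
  have hstepa : ∀ j, (inner A (y j) (w j) : A) = inner A (y j) (Q j s) := by
    intro j
    calc (inner A (y j) (w j) : A) = ∑ k, (if j = k then (inner A (y j) (w k) : A) else 0) := by
          rw [Finset.sum_ite_eq]
          simp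
      _ = ∑ k, (inner A (y j) (Q j (w k)) : A) := by
          refine Finset.sum_congr rfl fun k _ => ?_
          rw [hq2 j k]
          split_ifs with hjk
          · subst hjk; rfl
          · simp
      _ = ∑ k, (inner A (Q j (y j)) (w k) : A) := by
          refine Finset.sum_congr rfl fun k _ => (hq1 j (y j) (w k)).symm
      _ = (inner A (Q j (y j)) s : A) := by rw [hsdef, CStarModuleRight.inner_sum_right]
      _ = inner A (y j) (Q j s) := hq1 j (y j) s
  have key : (∑ j, star (inner A (y j) (w j) : A) * (inner A (y j) (w j) : A))
      ≤ (inner A s s : A) := by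
    calc (∑ j, star (inner A (y j) (w j) : A) * (inner A (y j) (w j) : A))
        = ∑ j, star (inner A (y j) (Q j s) : A) * (inner A (y j) (Q j s) : A) := by
          refine Finset.sum_congr rfl fun j _ => ?_
          rw [hstepa j]
      _ ≤ ∑ j, (inner A (Q j s) (Q j s) : A) := by
          refine Finset.sum_le_sum fun j _ => ?_
          calc star (inner A (y j) (Q j s) : A) * (inner A (y j) (Q j s) : A)
              ≤ G (A := A) y (Q j s) :=
                Finset.single_le_sum
                  (f := fun k => star (inner A (y k) (Q j s) : A) * (inner A (y k) (Q j s) : A))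
                  (fun k _ => star_mul_self_nonneg _) (Finset.mem_univ j)
            _ ≤ inner A (Q j s) (Q j s) := P (Q j s)
      _ = inner A s s := hq3 s
  have hnn : 0 ≤ ∑ j, star (inner A (y j) (w j) : A) * (inner A (y j) (w j) : A) :=
    Finset.sum_nonneg fun j _ => star_mul_self_nonneg _
  calc ‖∑ j, star (inner A (y j) (w j) : A) * (inner A (y j) (w j) : A)‖
      ≤ ‖(inner A s s : A)‖ := CStarAlgebra.norm_le_norm_of_nonneg_of_le hnn key
    _ = ‖s‖ ^ 2 := CStarModuleRight.norm_sq_eq.symm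

end Main

section Main2

/-- Facts about the regularized contraction `w₀ · f(⟨w₀,w₀⟩)` with `f t = √t/(t+ε)`. -/
lemma eps_facts {ε : ℝ} (hε : 0 < ε) (w0 : E) :
    ‖(w0 <• cfcₙ (fun t => Real.sqrt t * (t + ε)⁻¹) ((inner A w0 w0 : A)) : E)‖ ^ 2 ≤ 1 ∧
    ‖(inner A w0 w0 : A) -
      star (inner A (w0 <• cfcₙ (fun t => Real.sqrt t * (t + ε)⁻¹) ((inner A w0 w0 : A)) : E) w0 : A) *
      (inner A (w0 <• cfcₙ (fun t => Real.sqrt t * (t + ε)⁻¹) ((inner A w0 w0 : A)) : E) w0 : A)‖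
      ≤ 3 * ε := by
  set f : ℝ → ℝ := fun t => Real.sqrt t * (t + ε)⁻¹ with hfdef
  set b : A := (inner A w0 w0 : A) with hbdef
  have hb0 : 0 ≤ b := CStarModuleRight.inner_self_nonneg
  have hbsa : IsSelfAdjoint b := .of_nonneg hb0
  have hqs : ∀ t ∈ quasispectrum ℝ b, 0 ≤ t := fun t ht =>
    quasispectrum_nonneg_of_nonneg b hb0 t ht
  have hf0 : f 0 = 0 := by simp [hfdef]
  have hcf : ContinuousOn f (quasispectrum ℝ b) := by
    apply ContinuousOn.mul Real.continuous_sqrt.continuousOn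
    apply ContinuousOn.inv₀ (by fun_prop)
    intro t ht
    have := hqs t ht
    positivity
  have hasa : IsSelfAdjoint (cfcₙ f b) := cfcₙ_predicate f b
  have hg1c : ContinuousOn (fun t => f t * t) (quasispectrum ℝ b) := hcf.mul continuousOn_id
  have hinner : (inner A (w0 <• cfcₙ f b : E) w0 : A) = cfcₙ (fun t => f t * t) b := by
    rw [CStarModuleRight.inner_op_smul_left, hasa.star_eq]
    have h2 := cfcₙ_mul f id b hcf hf0 continuousOn_id rfl
    rw [cfcₙ_id ℝ b] at h2
    exact h2.symm
  constructor
  · -- norm bound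
    rw [CStarModuleRight.norm_sq_eq (A := A)]
    have h1 : (inner A (w0 <• cfcₙ f b : E) (w0 <• cfcₙ f b : E) : A)
        = cfcₙ (fun t => f t * (t * f t)) b := by
      rw [CStarModuleRight.inner_op_smul_right, hinner]
      have h3 := cfcₙ_mul (fun t => f t * t) f b hg1c (by simp [hf0]) hcf hf0
      rw [← h3]
      apply cfcₙ_congr
      intro t _
      dsimp only
      ring
    rw [h1]
    apply norm_cfcₙ_le
    intro t ht
    have ht0 : 0 ≤ t := hqs t ht
    have hp : 0 < t + ε := by linarith
    have hst : Real.sqrt t * Real.sqrt t = t := Real.mul_self_sqrt ht0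
    have he1 : f t * (t * f t) = (t * t) * ((t + ε)⁻¹ * (t + ε)⁻¹) := by
      rw [hfdef]
      dsimp only
      calc Real.sqrt t * (t + ε)⁻¹ * (t * (Real.sqrt t * (t + ε)⁻¹))
          = (Real.sqrt t * Real.sqrt t) * t * ((t + ε)⁻¹ * (t + ε)⁻¹) := by ring
        _ = (t * t) * ((t + ε)⁻¹ * (t + ε)⁻¹) := by rw [hst]
    rw [he1, Real.norm_eq_abs, abs_of_nonneg (by positivity)]
    rw [← mul_inv, mul_inv_le_iff₀ (by positivity), one_mul]
    nlinarith
  · -- error bound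
    have hcsa : IsSelfAdjoint (cfcₙ (fun t => f t * t) b) := cfcₙ_predicate _ b
    have hval : star (inner A (w0 <• cfcₙ f b : E) w0 : A) * (inner A (w0 <• cfcₙ f b : E) w0 : A)
        = cfcₙ (fun t => (f t * t) * (f t * t)) b := by
      rw [hinner, hcsa.star_eq]
      exact (cfcₙ_mul _ _ b hg1c (by simp [hf0]) hg1c (by simp [hf0])).symm
    rw [hval]
    have hsub := cfcₙ_sub id (fun t => (f t * t) * (f t * t)) b continuousOn_id rfl
      (hg1c.mul hg1c) (by simp [hf0])
    rw [cfcₙ_id ℝ b] at hsub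
    rw [← hsub]
    apply norm_cfcₙ_le
    intro t ht
    have ht0 : 0 ≤ t := hqs t ht
    have hp : 0 < t + ε := by linarith
    have hst : Real.sqrt t * Real.sqrt t = t := Real.mul_self_sqrt ht0
    have he1 : (f t * t) * (f t * t) = t * (t * t) * ((t + ε)⁻¹ * (t + ε)⁻¹) := by
      rw [hfdef]
      dsimp only
      calc Real.sqrt t * (t + ε)⁻¹ * t * (Real.sqrt t * (t + ε)⁻¹ * t)
          = (Real.sqrt t * Real.sqrt t) * (t * t) * ((t + ε)⁻¹ * (t + ε)⁻¹) := by ring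
        _ = t * (t * t) * ((t + ε)⁻¹ * (t + ε)⁻¹) := by rw [hst]
    have key1 : t - t * (t * t) * ((t + ε)⁻¹ * (t + ε)⁻¹)
        = (2 * t * t * ε + t * ε * ε) / ((t + ε) * (t + ε)) := by
      field_simp
      ring
    simp only [id_eq]
    rw [he1, Real.norm_eq_abs, key1, abs_of_nonneg (by positivity)]
    rw [div_le_iff₀ (by positivity)]
    nlinarith [mul_nonneg (mul_nonneg ht0 ht0) hε.le, mul_nonneg ht0 (mul_nonneg hε.le hε.le),
      mul_nonneg (mul_nonneg hε.le hε.le) hε.le]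

variable {m : ℕ} (w : Fin m → E) (Q : Fin m → E → E)

lemma inner_sum_sum (ho : ∀ j k, j ≠ k → (inner A (w j) (w k) : A) = 0) :
    (inner A (∑ j, w j) (∑ j, w j) : A) = ∑ j, (inner A (w j) (w j) : A) := by
  rw [CStarModuleRight.inner_sum_left]
  refine Finset.sum_congr rfl fun j _ => ?_
  rw [CStarModuleRight.inner_sum_right]
  exact Finset.sum_eq_single j (fun k _ hk => ho j k (Ne.symm hk) ▸ ho j k (Ne.symm hk))
    (fun hj => absurd (Finset.mem_univ j) hj)

lemma exists_value_ge (ho : ∀ j k, j ≠ k → (inner A (w j) (w k) : A) = 0)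
    (hq1 : ∀ j (u v : E), (inner A (Q j u) v : A) = inner A u (Q j v))
    (hq2 : ∀ j k, Q j (w k) = if j = k then w k else 0)
    (hq3 : ∀ z : E, ∑ j, (inner A (Q j z) (Q j z) : A) = inner A z z)
    {ε : ℝ} (hε : 0 < ε) :
    ∃ y : Fin m → E, mustar A m y ≤ 1 ∧
      ‖∑ j, w j‖ ^ 2 - 3 * m * ε ≤
        ‖∑ j, star (inner A (y j) (w j) : A) * (inner A (y j) (w j) : A)‖ := by
  classical
  refine ⟨fun j => w j <• cfcₙ (fun t => Real.sqrt t * (t + ε)⁻¹) ((inner A (w j) (w j) : A)),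
    ?_, ?_⟩
  · -- mustar bound
    apply mustar_le_one
    intro z hz
    set y : Fin m → E :=
      fun j => w j <• cfcₙ (fun t => Real.sqrt t * (t + ε)⁻¹) ((inner A (w j) (w j) : A)) with hydef
    have hterm : ∀ j, star (inner A (y j) z : A) * (inner A (y j) z : A)
        ≤ (inner A (Q j z) (Q j z) : A) := by
      intro j
      have h1 : (inner A (y j) z : A) = inner A (y j) (Q j z) := by
        rw [hydef]
        dsimp only
        rw [CStarModuleRight.inner_op_smul_left, CStarModuleRight.inner_op_smul_left]
        congr 1
        have h2 : (inner A (w j) z : A) = inner A (Q j (w j)) z := by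
          rw [hq2 j j, if_pos rfl]
        rw [h2, hq1 j (w j) z]
      rw [h1]
      calc star (inner A (y j) (Q j z) : A) * (inner A (y j) (Q j z) : A)
          = (inner A (Q j z) (y j) : A) * (inner A (y j) (Q j z) : A) := by
            rw [CStarModuleRight.star_inner]
        _ ≤ ‖y j‖ ^ 2 • (inner A (Q j z) (Q j z) : A) := CStarModuleRight.inner_mul_inner_swap_le
        _ ≤ (inner A (Q j z) (Q j z) : A) := by
            have hyj : ‖y j‖ ^ 2 ≤ 1 := (eps_facts hε (w j)).1
            have h2 : (0:A) ≤ (1 - ‖y j‖ ^ 2) • (inner A (Q j z) (Q j z) : A) :=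
              smul_nonneg (by linarith) CStarModuleRight.inner_self_nonneg
            have h3 : (1 - ‖y j‖ ^ 2) • (inner A (Q j z) (Q j z) : A)
                = (inner A (Q j z) (Q j z) : A) - ‖y j‖ ^ 2 • (inner A (Q j z) (Q j z) : A) := by
              rw [sub_smul, one_smul]
            rw [h3] at h2
            exact sub_nonneg.mp h2
    have hGle : G (A := A) y z ≤ (inner A z z : A) := by
      calc G (A := A) y z ≤ ∑ j, (inner A (Q j z) (Q j z) : A) :=
            Finset.sum_le_sum fun j _ => hterm j
        _ = inner A z z := hq3 z
    calc ‖G (A := A) y z‖ ≤ ‖(inner A z z : A)‖ :=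
          CStarAlgebra.norm_le_norm_of_nonneg_of_le (G_nonneg y z) hGle
      _ = ‖z‖ ^ 2 := CStarModuleRight.norm_sq_eq.symm
      _ ≤ 1 := pow_le_one₀ (norm_nonneg z) hz
  · -- value bound
    set y : Fin m → E :=
      fun j => w j <• cfcₙ (fun t => Real.sqrt t * (t + ε)⁻¹) ((inner A (w j) (w j) : A)) with hydef
    set VV : A := ∑ j, star (inner A (y j) (w j) : A) * (inner A (y j) (w j) : A) with hVVdef
    have hdiff : (inner A (∑ j, w j) (∑ j, w j) : A) - VV
        = ∑ j, ((inner A (w j) (w j) : A)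
            - star (inner A (y j) (w j) : A) * (inner A (y j) (w j) : A)) := by
      rw [inner_sum_sum w ho, hVVdef, ← Finset.sum_sub_distrib]
    have hnd : ‖(inner A (∑ j, w j) (∑ j, w j) : A) - VV‖ ≤ 3 * m * ε := by
      rw [hdiff]
      calc ‖∑ j, ((inner A (w j) (w j) : A)
            - star (inner A (y j) (w j) : A) * (inner A (y j) (w j) : A))‖
          ≤ ∑ j, ‖(inner A (w j) (w j) : A)
            - star (inner A (y j) (w j) : A) * (inner A (y j) (w j) : A)‖ := norm_sum_le _ _
        _ ≤ ∑ _j : Fin m, 3 * ε := Finset.sum_le_sum fun j _ => (eps_facts hε (w j)).2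
        _ = 3 * m * ε := by
            rw [Finset.sum_const, Finset.card_univ, Fintype.card_fin, nsmul_eq_mul]
            ring
    have h5 : ‖(inner A (∑ j, w j) (∑ j, w j) : A)‖ - ‖VV‖ ≤ 3 * m * ε :=
      le_trans (norm_sub_norm_le _ _) hnd
    have h6 : ‖(inner A (∑ j, w j) (∑ j, w j) : A)‖ = ‖∑ j, w j‖ ^ 2 :=
      CStarModuleRight.norm_sq_eq.symm
    rw [h6] at h5
    linarith

end Main2

/-- The main abstract lemma: pairwise orthogonal family with a compatible family of
"projections" has `‖·‖*` equal to the norm of the sum. -/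
lemma starNorm_eq_norm_sum {m : ℕ} (w : Fin m → E) (Q : Fin m → E → E)
    (ho : ∀ j k, j ≠ k → (inner A (w j) (w k) : A) = 0)
    (hq1 : ∀ j (u v : E), (inner A (Q j u) v : A) = inner A u (Q j v))
    (hq2 : ∀ j k, Q j (w k) = if j = k then w k else 0)
    (hq3 : ∀ z : E, ∑ j, (inner A (Q j z) (Q j z) : A) = inner A z z) :
    starNorm A m w = ‖∑ j, w j‖ := by
  have hub : ∀ r ∈ {r : ℝ | ∃ y : Fin m → E, mustar A m y ≤ 1 ∧
      r = Real.sqrt ‖∑ j, star (inner A (y j) (w j) : A) * (inner A (y j) (w j) : A)‖},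
      r ≤ ‖∑ j, w j‖ := by
    rintro r ⟨y, hy, rfl⟩
    have h1 := value_le w Q hq1 hq2 hq3 hy
    calc Real.sqrt ‖∑ j, star (inner A (y j) (w j) : A) * (inner A (y j) (w j) : A)‖
        ≤ Real.sqrt (‖∑ j, w j‖ ^ 2) := Real.sqrt_le_sqrt h1
      _ = ‖∑ j, w j‖ := Real.sqrt_sq (norm_nonneg _)
  have hbdd : BddAbove {r : ℝ | ∃ y : Fin m → E, mustar A m y ≤ 1 ∧
      r = Real.sqrt ‖∑ j, star (inner A (y j) (w j) : A) * (inner A (y j) (w j) : A)‖} :=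
    ⟨‖∑ j, w j‖, hub⟩
  have hup : starNorm A m w ≤ ‖∑ j, w j‖ := Real.sSup_le hub (norm_nonneg _)
  refine le_antisymm hup ?_
  refine le_of_forall_pos_le_add fun δ hδ => ?_
  have h0S : (0:ℝ) ∈ {r : ℝ | ∃ y : Fin m → E, mustar A m y ≤ 1 ∧
      r = Real.sqrt ‖∑ j, star (inner A (y j) (w j) : A) * (inner A (y j) (w j) : A)‖} := by
    refine ⟨fun _ => 0, ?_, ?_⟩
    · apply mustar_le_one
      intro z _
      simp [G]
    · simp
  have hsup0 : 0 ≤ starNorm A m w := le_csSup hbdd h0S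
  rcases le_or_gt ‖∑ j, w j‖ δ with hc | hc
  · linarith
  · have hεpos : 0 < δ ^ 2 / (3 * m + 1) := by positivity
    obtain ⟨y, hy1, hy2⟩ := exists_value_ge w Q ho hq1 hq2 hq3 hεpos
    have hmem : Real.sqrt ‖∑ j, star (inner A (y j) (w j) : A) * (inner A (y j) (w j) : A)‖ ∈
        {r : ℝ | ∃ y : Fin m → E, mustar A m y ≤ 1 ∧
        r = Real.sqrt ‖∑ j, star (inner A (y j) (w j) : A) * (inner A (y j) (w j) : A)‖} :=
      ⟨y, hy1, rfl⟩
    have hr := le_csSup hbdd hmem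
    have h3m : 3 * (m:ℝ) * (δ ^ 2 / (3 * m + 1)) < δ ^ 2 := by
      have hlt : (3*(m:ℝ)) / (3*m+1) < 1 := by
        rw [div_lt_one (by positivity)]
        linarith
      calc 3*(m:ℝ)*(δ ^ 2 / (3 * m + 1)) = (3*m/(3*m+1)) * δ^2 := by ring
        _ < 1 * δ^2 := by
            apply mul_lt_mul_of_pos_right hlt (by positivity)
        _ = δ^2 := one_mul _
    have hsq : (‖∑ j, w j‖ - δ) ^ 2 ≤ ‖∑ j, w j‖ ^ 2 - 3 * m * (δ ^ 2 / (3 * m + 1)) := by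
      nlinarith
    have hs2 : ‖∑ j, w j‖ - δ
        ≤ Real.sqrt ‖∑ j, star (inner A (y j) (w j) : A) * (inner A (y j) (w j) : A)‖ := by
      have h7 := Real.sqrt_le_sqrt (hsq.trans hy2)
      rw [Real.sqrt_sq (by linarith)] at h7
      exact h7
    have : starNorm A m w = sSup {r : ℝ | ∃ y : Fin m → E, mustar A m y ≤ 1 ∧
        r = Real.sqrt ‖∑ j, star (inner A (y j) (w j) : A) * (inner A (y j) (w j) : A)‖} := rfl
    rw [this]
    linarith

end StarNormAux

/-- A direct sum decomposition of a Hilbert C*-module into pairwise orthogonal closed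
submodules is orthogonal with respect to `(‖·‖*ₙ)`: for `xᵢ ∈ Xᵢ` and any partition
`{S₁,…,S_m}` of `{1,…,n}`, with `yⱼ = Σ_{i∈Sⱼ} xᵢ`, one has `‖y‖*_m = ‖x‖*ₙ`;
in particular `‖x‖*ₙ = ‖x₁ + ⋯ + xₙ‖`. -/
theorem decomposition_orthogonal_starNorm [CompleteSpace E]
    (n : ℕ) (Y : Fin n → Submodule ℂ E)
    (hclosed : ∀ i, IsClosed (Y i : Set E))
    (hsmul : ∀ i, ∀ (a : A), ∀ y ∈ Y i, MulOpposite.op a • y ∈ Y i)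
    (hcompl : ∀ i, ∀ v : E, ∃ y z : E, y ∈ Y i ∧ v = y + z ∧
      ∀ y' ∈ Y i, (inner A y' z) = 0)
    (huniq : ∀ v : E, ∃! f : Fin n → E, (∀ i, f i ∈ Y i) ∧ ∑ i, f i = v)
    (horth : ∀ i j, i ≠ j → ∀ x ∈ Y i, ∀ y ∈ Y j, (inner A x y) = 0)
    (x : Fin n → E) (hx : ∀ i, x i ∈ Y i) :
    (∀ (m : ℕ) (S : Fin m → Finset (Fin n)), (∀ i, ∃! j, i ∈ S j) →
      starNorm A m (fun j => ∑ i ∈ S j, x i) = starNorm A n x) ∧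
    starNorm A n x = ‖∑ i, x i‖ := by
  classical
  set D : E → Fin n → E := fun v => (huniq v).choose with hDdef
  have hD1 : ∀ v i, D v i ∈ Y i := fun v i => ((huniq v).choose_spec.1).1 i
  have hD2 : ∀ v, ∑ i, D v i = v := fun v => ((huniq v).choose_spec.1).2
  have hDu : ∀ (v : E) (g : Fin n → E), (∀ i, g i ∈ Y i) → ∑ i, g i = v → g = D v :=
    fun v g h1 h2 => (huniq v).choose_spec.2 g ⟨h1, h2⟩
  set P : Fin n → E → E := fun i v => D v i with hPdef
  have hinner0 : ∀ (i j : Fin n), i ≠ j → ∀ (u v : E), (inner A (D u i) (D v j) : A) = 0 :=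
    fun i j hij u v => horth i j hij _ (hD1 u i) _ (hD1 v j)
  have hq1 : ∀ i (u v : E), (inner A (P i u) v : A) = inner A u (P i v) := by
    intro i u v
    have e1 : (inner A (P i u) v : A) = inner A (D u i) (D v i) := by
      conv_lhs => rw [← hD2 v]
      rw [CStarModuleRight.inner_sum_right]
      exact Finset.sum_eq_single i (fun j _ hj => hinner0 i j (Ne.symm hj) u v)
        (fun h => absurd (Finset.mem_univ i) h)
    have e2 : (inner A u (P i v) : A) = inner A (D u i) (D v i) := by
      conv_lhs => rw [← hD2 u]
      rw [CStarModuleRight.inner_sum_left]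
      exact Finset.sum_eq_single i (fun j _ hj => hinner0 j i hj u v)
        (fun h => absurd (Finset.mem_univ i) h)
    rw [e1, e2]
  have hq2 : ∀ i j, P i (x j) = if i = j then x j else 0 := by
    intro i j
    have hg : (fun k => if k = j then x j else 0) = D (x j) := by
      apply hDu
      · intro k
        by_cases hk : k = j
        · rw [if_pos hk, hk]
          exact hx j
        · rw [if_neg hk]
          exact (Y k).zero_mem
      · simp
    exact (congrFun hg i).symm
  have hq3 : ∀ z : E, ∑ i, (inner A (P i z) (P i z) : A) = inner A z z := by
    intro z
    have e1 : (inner A z z : A) = ∑ i, inner A (D z i) (D z i) := by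
      conv_lhs => rw [← hD2 z]
      rw [CStarModuleRight.inner_sum_left]
      refine Finset.sum_congr rfl fun i _ => ?_
      rw [CStarModuleRight.inner_sum_right]
      exact Finset.sum_eq_single i (fun j _ hj => hinner0 i j (Ne.symm hj) z z)
        (fun h => absurd (Finset.mem_univ i) h)
    rw [e1]
  have hox : ∀ i j, i ≠ j → (inner A (x i) (x j) : A) = 0 :=
    fun i j hij => horth i j hij _ (hx i) _ (hx j)
  have hpart2 : starNorm A n x = ‖∑ i, x i‖ :=
    StarNormAux.starNorm_eq_norm_sum x P hox hq1 hq2 hq3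
  refine ⟨?_, hpart2⟩
  intro m S hpart
  set σ : Fin n → Fin m := fun i => (hpart i).choose with hσdef
  have hσ1 : ∀ i, i ∈ S (σ i) := fun i => (hpart i).choose_spec.1
  have hσ2 : ∀ i j, i ∈ S j → j = σ i := fun i j hj => (hpart i).choose_spec.2 j hj
  have hmemS : ∀ i j, i ∈ S j ↔ σ i = j := fun i j =>
    ⟨fun h => (hσ2 i j h).symm, fun h => h ▸ hσ1 i⟩
  have hSeq : ∀ j, S j = Finset.univ.filter (fun i => σ i = j) := by
    intro j
    ext i
    simp [hmemS i j]
  have hsum_partE : ∀ (f : Fin n → E), ∑ j, ∑ i ∈ S j, f i = ∑ i, f i := by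
    intro f
    calc ∑ j, ∑ i ∈ S j, f i
        = ∑ j, ∑ i ∈ Finset.univ.filter (fun i => σ i = j), f i := by
          refine Finset.sum_congr rfl fun j _ => ?_
          rw [hSeq j]
      _ = ∑ i, f i := Finset.sum_fiberwise _ _ _
  have hsum_partA : ∀ (f : Fin n → A), ∑ j, ∑ i ∈ S j, f i = ∑ i, f i := by
    intro f
    calc ∑ j, ∑ i ∈ S j, f i
        = ∑ j, ∑ i ∈ Finset.univ.filter (fun i => σ i = j), f i := by
          refine Finset.sum_congr rfl fun j _ => ?_
          rw [hSeq j]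
      _ = ∑ i, f i := Finset.sum_fiberwise _ _ _
  set w : Fin m → E := fun j => ∑ i ∈ S j, x i with hwdef
  have how : ∀ j k, j ≠ k → (inner A (w j) (w k) : A) = 0 := by
    intro j k hjk
    rw [hwdef]
    dsimp only
    rw [CStarModuleRight.inner_sum_left]
    apply Finset.sum_eq_zero
    intro i hi
    rw [CStarModuleRight.inner_sum_right]
    apply Finset.sum_eq_zero
    intro l hl
    have hil : i ≠ l := by
      intro h
      apply hjk
      rw [hσ2 i j hi, hσ2 l k hl, h]
    exact horth i l hil _ (hx i) _ (hx l)
  set Qm : Fin m → E → E := fun j z => ∑ i ∈ S j, P i z with hQmdef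
  have hq1m : ∀ j (u v : E), (inner A (Qm j u) v : A) = inner A u (Qm j v) := by
    intro j u v
    rw [hQmdef]
    dsimp only
    rw [CStarModuleRight.inner_sum_left, CStarModuleRight.inner_sum_right]
    exact Finset.sum_congr rfl fun i _ => hq1 i u v
  have hPwk : ∀ i k, P i (w k) = if i ∈ S k then x i else 0 := by
    intro i k
    have hg : (fun i => if i ∈ S k then x i else 0) = D (w k) := by
      apply hDu
      · intro i'
        by_cases hi : i' ∈ S k
        · rw [if_pos hi]
          exact hx i'
        · rw [if_neg hi]
          exact (Y i').zero_mem
      · rw [Finset.sum_ite_mem, Finset.univ_inter]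
    exact (congrFun hg i).symm
  have hq2m : ∀ j k, Qm j (w k) = if j = k then w k else 0 := by
    intro j k
    rw [hQmdef]
    dsimp only
    calc ∑ i ∈ S j, P i (w k) = ∑ i ∈ S j, (if i ∈ S k then x i else 0) :=
          Finset.sum_congr rfl fun i _ => hPwk i k
      _ = ∑ i ∈ S j ∩ S k, x i := Finset.sum_ite_mem _ _ _
      _ = if j = k then w k else 0 := by
          by_cases hjk : j = k
          · subst hjk
            rw [Finset.inter_self, if_pos rfl]
          · rw [if_neg hjk]
            have hempty : S j ∩ S k = ∅ := by
              apply Finset.eq_empty_of_forall_notMem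
              intro i hi
              rw [Finset.mem_inter] at hi
              exact hjk (by rw [hσ2 i j hi.1, hσ2 i k hi.2])
            rw [hempty, Finset.sum_empty]
  have hq3m : ∀ z : E, ∑ j, (inner A (Qm j z) (Qm j z) : A) = inner A z z := by
    intro z
    have hstep : ∀ j, (inner A (Qm j z) (Qm j z) : A) = ∑ i ∈ S j, inner A (P i z) (P i z) := by
      intro j
      rw [hQmdef]
      dsimp only
      rw [CStarModuleRight.inner_sum_left]
      refine Finset.sum_congr rfl fun i hi => ?_
      rw [CStarModuleRight.inner_sum_right]
      exact Finset.sum_eq_single i (fun l _ hli => hinner0 i l (Ne.symm hli) z z)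
        (fun h => absurd hi h)
    rw [Finset.sum_congr rfl fun j _ => hstep j,
      hsum_partA (fun i => (inner A (P i z) (P i z) : A)), hq3 z]
  have hmain := StarNormAux.starNorm_eq_norm_sum w Qm how hq1m hq2m hq3m
  rw [hmain, hpart2]
  congr 1
  exact hsum_partE x
end
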